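/- arXiv:1709.06421 — 2 statements merged into one kernel-verified Lean document; each statement's English description precedes it below -/
import Mathlib

section
/- If a collection A of subsets of a domain D has VC dimension c, then for all n ≥ 1, π_A(n) ≤ ∑_{i=0}^{c} C(n,i); in particular for c ≥ 1 and n ≥ c, π_A(n) ≤ n^c + 1 (Sauer–Shelah lemma). -/
open Finset

private lemma sum_choose_le_pow (c : ℕ) (hc : 1 ≤ c) :
    ∀ n : ℕ, c ≤ n → ∑ i ∈ Finset.range (c + 1), n.choose i ≤ n ^ c + 1 := by
  induction c, hc using Nat.le_induction with
  | base =>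
    intro n hn
    simp [Finset.sum_range_succ]
    omega
  | succ c hc ih =>
    intro n hn
    rw [Finset.sum_range_succ]
    have h1 : ∑ i ∈ Finset.range (c + 1), n.choose i ≤ n ^ c + 1 := ih n (by omega)
    have h2 : n.choose (c + 1) ≤ n ^ c * (n - 1) := by
      have := Nat.choose_succ_right_eq n c
      have h3 : n.choose (c + 1) ≤ n.choose c * (n - c) :=
        calc n.choose (c + 1) ≤ n.choose (c + 1) * (c + 1) := Nat.le_mul_of_pos_right _ (by omega)
          _ = n.choose c * (n - c) := this
      calc n.choose (c + 1) ≤ n.choose c * (n - c) := h3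
        _ ≤ n ^ c * (n - 1) :=
          Nat.mul_le_mul (Nat.choose_le_pow n c) (by omega)
    have h4 : n ^ c + n ^ c * (n - 1) = n ^ (c + 1) := by
      have : n ^ c * n = n ^ (c + 1) := (pow_succ n c).symm
      have hn1 : 1 ≤ n := by omega
      calc n ^ c + n ^ c * (n - 1) = n ^ c * (1 + (n - 1)) := by ring
        _ = n ^ c * n := by rw [Nat.add_sub_cancel' hn1]
        _ = n ^ (c + 1) := this
    omega

/-- Sauer–Shelah lemma: if every set shattered by the set system `𝒜` on domain `D`
has cardinality at most `c`, then for any `n`-point set `B` the number of traces of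
`𝒜` on `B` is at most `∑_{i=0}^c C(n,i)`; in particular, for `c ≥ 1` and `n ≥ c` it
is at most `n^c + 1`. -/
theorem stmt_5 {D : Type*} [DecidableEq D] (𝒜 : Finset (Finset D)) (c : ℕ)
    (hVC : ∀ s : Finset D, (∀ t ⊆ s, ∃ u ∈ 𝒜, u ∩ s = t) → s.card ≤ c) :
    ∀ B : Finset D,
      ((𝒜.image (fun A => A ∩ B)).card ≤ ∑ i ∈ Finset.range (c + 1), B.card.choose i) ∧
      (1 ≤ c → c ≤ B.card → (𝒜.image (fun A => A ∩ B)).card ≤ B.card ^ c + 1) := by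
  intro B
  set ℬ : Finset (Finset D) := 𝒜.image (fun A => A ∩ B) with hℬ
  have key : ℬ.card ≤ ∑ i ∈ Finset.range (c + 1), B.card.choose i := by
    have pajor := Finset.card_le_card_shatterer ℬ
    have hsub : ℬ.shatterer ⊆ (Finset.range (c + 1)).biUnion (fun i => B.powersetCard i) := by
      intro s hs
      have hsh : ℬ.Shatters s := Finset.mem_shatterer.1 hs
      -- s ⊆ B
      obtain ⟨u, hu, hsu⟩ := hsh (t := s) Finset.Subset.rfl
      have hsB : s ⊆ B := by
        have h1 : s ⊆ u := Finset.inter_eq_left.1 hsu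
        obtain ⟨A, hA, rfl⟩ := Finset.mem_image.1 hu
        exact h1.trans Finset.inter_subset_right
      -- s.card ≤ c
      have hcard : s.card ≤ c := by
        apply hVC
        intro t ht
        obtain ⟨v, hv, hsv⟩ := hsh ht
        obtain ⟨A, hA, rfl⟩ := Finset.mem_image.1 hv
        refine ⟨A, hA, ?_⟩
        rw [← hsv]
        ext x
        simp only [Finset.mem_inter]
        constructor
        · rintro ⟨hxA, hxs⟩; exact ⟨hxs, hxA, hsB hxs⟩
        · rintro ⟨hxs, hxA, _⟩; exact ⟨hxA, hxs⟩
      exact Finset.mem_biUnion.2 ⟨s.card, Finset.mem_range.2 (by omega),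
        Finset.mem_powersetCard.2 ⟨hsB, rfl⟩⟩
    calc ℬ.card ≤ ℬ.shatterer.card := pajor
      _ ≤ ((Finset.range (c + 1)).biUnion (fun i => B.powersetCard i)).card :=
        Finset.card_le_card hsub
      _ ≤ ∑ i ∈ Finset.range (c + 1), (B.powersetCard i).card := Finset.card_biUnion_le
      _ = ∑ i ∈ Finset.range (c + 1), B.card.choose i := by
        simp [Finset.card_powersetCard]
  exact ⟨key, fun hc hcn => key.trans (sum_choose_le_pow c hc B.card hcn)⟩
end

section
/- For independent real random variables X, X', Y, Y' with X' =_d X and Y' =_d Y and finite first moments, the energy distance E(X,Y) = 2·E|X−Y| − E|X−X'| − E|Y−Y'| is nonnegative, and equals 0 if X and Y have the same distribution. -/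
open MeasureTheory ProbabilityTheory Set
open scoped ENNReal NNReal

/-!
Writing `|x - y| = λ[x, y) + λ[y, x)` and integrating in the other order (Tonelli), for independent
`X ~ ν`, `Y ~ ρ` with distribution functions `F`, `G` one gets
`E|X - Y| = ∫ F (1 - G) + G (1 - F) dt`. Hence
`2 E|X - Y| - E|X - X'| - E|Y - Y'| = 2 ∫ (F - G)² dt`, which is nonnegative, and the three expectations coincide when `ν = ρ`.
-/

lemma ofReal_abs_sub_eq_volume_Ico_add_volume_Ico (x y : ℝ) :
    ENNReal.ofReal |x - y| = volume (Ico x y) + volume (Ico y x) := by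
  rw [Real.volume_Ico, Real.volume_Ico]
  rcases le_total x y with h | h
  · rw [abs_of_nonpos (sub_nonpos.2 h), neg_sub, ENNReal.ofReal_of_nonpos (sub_nonpos.2 h),
      add_zero]
  · rw [abs_of_nonneg (sub_nonneg.2 h), ENNReal.ofReal_of_nonpos (sub_nonpos.2 h), zero_add]

lemma lintegral_volume_Ico_prod (ν ρ : Measure ℝ) [SFinite ν] [SFinite ρ] :
    ∫⁻ p, volume (Ico p.1 p.2) ∂(ν.prod ρ) = ∫⁻ t, ν (Iic t) * ρ (Ioi t) := by
  set S : Set ((ℝ × ℝ) × ℝ) := {q | q.1.1 ≤ q.2 ∧ q.2 < q.1.2}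
  have hS : MeasurableSet S :=
    (measurableSet_le measurable_fst.fst measurable_snd).inter
      (measurableSet_lt measurable_snd measurable_fst.snd)
  calc ∫⁻ p, volume (Ico p.1 p.2) ∂(ν.prod ρ)
      = (ν.prod ρ).prod volume S := (Measure.prod_apply hS).symm
    _ = ∫⁻ t, ν.prod ρ (Iic t ×ˢ Ioi t) := Measure.prod_apply_symm hS
    _ = ∫⁻ t, ν (Iic t) * ρ (Ioi t) := by simp_rw [Measure.prod_prod]

lemma lintegral_ofReal_abs_sub_prod (ν ρ : Measure ℝ) [SFinite ν] [SFinite ρ] :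
    ∫⁻ p, ENNReal.ofReal |p.1 - p.2| ∂(ν.prod ρ) =
      ∫⁻ t, ν (Iic t) * ρ (Ioi t) + ρ (Iic t) * ν (Ioi t) := by
  have hswap : ∫⁻ p, volume (Ico p.2 p.1) ∂(ν.prod ρ) = ∫⁻ t, ρ (Iic t) * ν (Ioi t) := by
    rw [← lintegral_volume_Ico_prod, ← lintegral_prod_swap]
    rfl
  simp_rw [ofReal_abs_sub_eq_volume_Ico_add_volume_Ico]
  have hIic : Measurable fun t => ν (Iic t) :=
    Monotone.measurable fun _ _ h => measure_mono (Iic_subset_Iic.2 h)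
  have hIoi : Measurable fun t => ρ (Ioi t) :=
    Antitone.measurable fun _ _ h => measure_mono (Ioi_subset_Ioi h)
  rw [lintegral_add_left, lintegral_volume_Ico_prod, hswap]
  · exact (lintegral_add_left (hIic.mul hIoi) _).symm
  · simp_rw [Real.volume_Ico]
    fun_prop

lemma ENNReal.mul_add_mul_le_of_add_eq_one {a a' b b' : ℝ≥0∞} (ha : a + a' = 1) (hb : b + b' = 1) :
    a * a' + b * b' ≤ a * b' + b * a' := by
  lift a to ℝ≥0 using ne_top_of_le_ne_top ENNReal.one_ne_top (ha ▸ le_self_add)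
  lift a' to ℝ≥0 using ne_top_of_le_ne_top ENNReal.one_ne_top (ha ▸ le_add_self)
  lift b to ℝ≥0 using ne_top_of_le_ne_top ENNReal.one_ne_top (hb ▸ le_self_add)
  lift b' to ℝ≥0 using ne_top_of_le_ne_top ENNReal.one_ne_top (hb ▸ le_add_self)
  have ha : (a : ℝ) + a' = 1 := by exact_mod_cast ha
  have hb : (b : ℝ) + b' = 1 := by exact_mod_cast hb
  have : (a : ℝ) * a' + b * b' ≤ a * b' + b * a' := by nlinarith [sq_nonneg ((a : ℝ) - b)]
  exact_mod_cast this

lemma lintegral_ofReal_abs_sub_prod_self_add_le (ν ρ : Measure ℝ) [IsProbabilityMeasure ν]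
    [IsProbabilityMeasure ρ] :
    ∫⁻ p, ENNReal.ofReal |p.1 - p.2| ∂(ν.prod ν) + ∫⁻ p, ENNReal.ofReal |p.1 - p.2| ∂(ρ.prod ρ) ≤
      2 * ∫⁻ p, ENNReal.ofReal |p.1 - p.2| ∂(ν.prod ρ) := by
  simp_rw [lintegral_ofReal_abs_sub_prod, ← lintegral_const_mul' _ _ ENNReal.ofNat_ne_top]
  refine (le_lintegral_add _ _).trans (lintegral_mono fun t => ?_)
  have hsum : ∀ (κ : Measure ℝ) [IsProbabilityMeasure κ], κ (Iic t) + κ (Ioi t) = 1 := by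
    intro κ _
    rw [← compl_Iic, measure_add_measure_compl measurableSet_Iic, measure_univ]
  calc _ = 2 * (ν (Iic t) * ν (Ioi t) + ρ (Iic t) * ρ (Ioi t)) := by ring
    _ ≤ _ := by gcongr 2 * ?_; exact ENNReal.mul_add_mul_le_of_add_eq_one (hsum ν) (hsum ρ)

lemma integral_abs_sub_prod_self_add_le {ν ρ : Measure ℝ} [IsProbabilityMeasure ν]
    [IsProbabilityMeasure ρ] (hν : Integrable id ν) (hρ : Integrable id ρ) :
    ∫ p, |p.1 - p.2| ∂(ν.prod ν) + ∫ p, |p.1 - p.2| ∂(ρ.prod ρ) ≤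
      2 * ∫ p, |p.1 - p.2| ∂(ν.prod ρ) := by
  have hint : ∀ {κ κ' : Measure ℝ} [IsProbabilityMeasure κ] [IsProbabilityMeasure κ'],
      Integrable id κ → Integrable id κ' → Integrable (fun p : ℝ × ℝ => |p.1 - p.2|) (κ.prod κ') :=
    fun hκ hκ' => ((hκ.comp_fst _).sub (hκ'.comp_snd _)).abs
  have hfin : ∀ {κ κ' : Measure ℝ} [IsProbabilityMeasure κ] [IsProbabilityMeasure κ'],
      Integrable id κ → Integrable id κ' →
        ∫⁻ p, ENNReal.ofReal |p.1 - p.2| ∂(κ.prod κ') ≠ ⊤ :=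
    fun hκ hκ' => (hint hκ hκ').lintegral_lt_top.ne
  have htoReal : ∀ κ : Measure (ℝ × ℝ),
      ∫ p, |p.1 - p.2| ∂κ = (∫⁻ p, ENNReal.ofReal |p.1 - p.2| ∂κ).toReal := fun κ =>
    integral_eq_lintegral_of_nonneg_ae (Filter.Eventually.of_forall fun _ => abs_nonneg _)
      (by fun_prop : Measurable fun p : ℝ × ℝ => |p.1 - p.2|).aestronglyMeasurable
  simp_rw [htoReal]
  rw [← ENNReal.toReal_add (hfin hν hν) (hfin hρ hρ), ← ENNReal.toReal_ofNat 2,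
    ← ENNReal.toReal_mul]
  exact ENNReal.toReal_mono (ENNReal.mul_ne_top ENNReal.ofNat_ne_top (hfin hν hρ))
    (lintegral_ofReal_abs_sub_prod_self_add_le ν ρ)

lemma ProbabilityTheory.IndepFun.integral_abs_sub {Ω : Type*} [MeasurableSpace Ω] {μ : Measure Ω}
    [IsFiniteMeasure μ] {f g : Ω → ℝ} (hf : Measurable f) (hg : Measurable g)
    (hfg : IndepFun f g μ) :
    ∫ ω, |f ω - g ω| ∂μ = ∫ p, |p.1 - p.2| ∂((μ.map f).prod (μ.map g)) := by
  rw [← (indepFun_iff_map_prod_eq_prod_map_map hf.aemeasurable hg.aemeasurable).1 hfg,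
    integral_map (hf.prodMk hg).aemeasurable (by fun_prop)]

/-- For mutually independent real random variables `X, X', Y, Y'` with `X' =_d X`,
`Y' =_d Y` and finite first moments, the energy distance
`E(X,Y) = 2·E|X−Y| − E|X−X'| − E|Y−Y'|` is nonnegative, and equals `0` if `X` and `Y`
are identically distributed. -/
theorem stmt_8 {Ω : Type*} [MeasurableSpace Ω] (μ : Measure Ω) [IsProbabilityMeasure μ]
    (X X' Y Y' : Ω → ℝ)
    (hmX : Measurable X) (hmX' : Measurable X') (hmY : Measurable Y) (hmY' : Measurable Y')
    (hindep : iIndepFun ![X, X', Y, Y'] μ)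
    (hX' : Measure.map X' μ = Measure.map X μ) (hY' : Measure.map Y' μ = Measure.map Y μ)
    (hiX : Integrable X μ) (hiY : Integrable Y μ)
    (E : ℝ)
    (hE : E = 2 * ∫ ω, |X ω - Y ω| ∂μ - ∫ ω, |X ω - X' ω| ∂μ - ∫ ω, |Y ω - Y' ω| ∂μ) :
    0 ≤ E ∧ (Measure.map X μ = Measure.map Y μ → E = 0) := by
  rw [IndepFun.integral_abs_sub hmX hmY (hindep.indepFun (by decide : (0 : Fin 4) ≠ 2)),
    IndepFun.integral_abs_sub hmX hmX' (hindep.indepFun (by decide : (0 : Fin 4) ≠ 1)),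
    IndepFun.integral_abs_sub hmY hmY' (hindep.indepFun (by decide : (2 : Fin 4) ≠ 3)),
    hX', hY'] at hE
  have := Measure.isProbabilityMeasure_map (μ := μ) hmX.aemeasurable
  have := Measure.isProbabilityMeasure_map (μ := μ) hmY.aemeasurable
  refine ⟨?_, fun hXY => by rw [hE, hXY]; ring⟩
  have := integral_abs_sub_prod_self_add_le
    ((integrable_map_measure aestronglyMeasurable_id hmX.aemeasurable).2 hiX)
    ((integrable_map_measure aestronglyMeasurable_id hmY.aemeasurable).2 hiY)
  linarith
end
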